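/- Let n ≥ 1, N = 2^n, and let w = (w_0,…,w_{n-1}) be a real vector. Then (1/N²) | Σ_{x ∈ {0,1}^n} exp(2πi (Σ_j w_j x_j)/N) |² = Π_{j=0}^{n-1} cos²(π w_j / N). -/

import Mathlib

/-!
Factor the exponential of a sum over `x ∈ {0,1}^n` as a product over coordinates: the sum becomes
`∏ⱼ (1 + e^{iθⱼ})` with `θⱼ = 2π wⱼ / N`, and `|1 + e^{iθ}| = 2 |cos (θ/2)|`. The factors `4 = 2²`
multiply to `4^n = N²`, which cancels the normalisation.
-/

open Complex Finset

theorem Complex.sum_fun_fin_two_exp_sum {ι : Type*} [Fintype ι] [DecidableEq ι] (c : ι → ℂ) :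
    ∑ x : ι → Fin 2, exp (∑ j, c j * ((x j : ℕ) : ℂ)) = ∏ j, (1 + exp (c j)) := by
  simp_rw [exp_sum]
  rw [← Fintype.prod_sum fun j (v : Fin 2) => exp (c j * ((v : ℕ) : ℂ))]
  simp [Fin.sum_univ_two]

theorem Complex.norm_one_add_exp_mul_I_sq (θ : ℝ) :
    ‖1 + exp (θ * I)‖ ^ 2 = 4 * Real.cos (θ / 2) ^ 2 := by
  have hfactor : 1 + exp (θ * I) = exp ((θ / 2 : ℝ) * I) * (2 * Real.cos (θ / 2)) := by
    rw [ofReal_cos, cos, mul_div_cancel₀ _ two_ne_zero, mul_add, ← exp_add, ← exp_add]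
    push_cast
    ring_nf
    simp [add_comm]
  rw [hfactor, norm_mul, norm_exp_ofReal_mul_I, one_mul, norm_mul, mul_pow, norm_real,
    Real.norm_eq_abs, sq_abs]
  norm_num

theorem generalized_qft_stmt_18_general (n : ℕ) (w : Fin n → ℝ) :
    (1 / ((2 : ℝ) ^ n) ^ 2) *
        (‖(∑ x : Fin n → Fin 2,
          Complex.exp (2 * (Real.pi : ℂ) * Complex.I *
            ((∑ j, w j * ((x j : ℕ) : ℝ) : ℝ) : ℂ) / (2 : ℂ) ^ n))‖) ^ 2
      = ∏ j : Fin n, Real.cos (Real.pi * w j / 2 ^ n) ^ 2 := by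
  set θ : Fin n → ℝ := fun j => 2 * Real.pi * w j / 2 ^ n
  have hexponent : ∀ x : Fin n → Fin 2,
      2 * (Real.pi : ℂ) * I * ((∑ j, w j * ((x j : ℕ) : ℝ) : ℝ) : ℂ) / (2 : ℂ) ^ n
        = ∑ j, (θ j : ℂ) * I * ((x j : ℕ) : ℂ) := by
    intro x
    simp only [θ]
    push_cast
    rw [mul_sum, sum_div]
    exact sum_congr rfl fun j _ => by ring
  have hnorm : ‖∑ x : Fin n → Fin 2, exp (∑ j, (θ j : ℂ) * I * ((x j : ℕ) : ℂ))‖ ^ 2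
      = ∏ j, 4 * Real.cos (Real.pi * w j / 2 ^ n) ^ 2 := by
    rw [sum_fun_fin_two_exp_sum, norm_prod, ← prod_pow]
    refine prod_congr rfl fun j _ => ?_
    rw [norm_one_add_exp_mul_I_sq]
    congr 3
    ring
  have hfour_pow : ((2 : ℝ) ^ n) ^ 2 = ∏ _j : Fin n, 4 := by
    rw [prod_const, card_univ, Fintype.card_fin, ← pow_mul, mul_comm, pow_mul]
    norm_num
  simp_rw [hexponent, hnorm, prod_mul_distrib, hfour_pow]
  field_simp

/-- For `n ≥ 1`, `N = 2^n` and a real vector `w`,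
`(1/N²) |Σ_{x ∈ {0,1}^n} exp(2πi (Σ_j w_j x_j)/N)|² = Π_j cos²(π w_j / N)`. -/
theorem generalized_qft_stmt_18 (n : ℕ) (hn : 1 ≤ n) (w : Fin n → ℝ) :
    (1 / ((2 : ℝ) ^ n) ^ 2) *
        (‖(∑ x : Fin n → Fin 2,
          Complex.exp (2 * (Real.pi : ℂ) * Complex.I *
            ((∑ j, w j * ((x j : ℕ) : ℝ) : ℝ) : ℂ) / (2 : ℂ) ^ n))‖) ^ 2
      = ∏ j : Fin n, Real.cos (Real.pi * w j / 2 ^ n) ^ 2 :=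
  generalized_qft_stmt_18_general n w
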